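/- Fractional integration by parts: for w in C_c^∞(R^d) and Ψ in C_c^∞(R^d, R^d) and s in (0,1), ∫_{R^d} grad^s w · Ψ = -∫_{R^d} w · div^s Ψ. -/

import Mathlib

open MeasureTheory Real
open scoped RealInnerProductSpace

noncomputable section

abbrev Ed (d : ℕ) := EuclideanSpace ℝ (Fin d)

/-- μ(d,s) = 2^s Γ((d+s+1)/2) / (π^{d/2} Γ((1-s)/2)). -/
noncomputable def muC (d : ℕ) (s : ℝ) : ℝ :=
  2 ^ s * Real.Gamma (((d : ℝ) + s + 1) / 2) /
    (Real.pi ^ ((d : ℝ) / 2) * Real.Gamma ((1 - s) / 2))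

/-- Fractional gradient of order `s ∈ (0,1)`. -/
noncomputable def gradS (d : ℕ) (s : ℝ) (w : Ed d → ℝ) (x : Ed d) : Ed d :=
  muC d s • ∫ y : Ed d, ((w y - w x) / ‖x - y‖ ^ ((d : ℝ) + s + 1)) • (y - x)

/-- Fractional divergence of order `s ∈ (0,1)`. -/
noncomputable def divS (d : ℕ) (s : ℝ) (Ψ : Ed d → Ed d) (x : Ed d) : ℝ :=
  muC d s * ∫ y : Ed d, ⟪Ψ y - Ψ x, y - x⟫ / ‖x - y‖ ^ ((d : ℝ) + s + 1)

section Aux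

open Set Metric
open scoped ENNReal

lemma lintegral_radial (d : ℕ) (hd : 0 < d) (f : ℝ → ℝ≥0∞) (hf : Measurable f) :
    ∫⁻ x : Ed d, f ‖x‖ = (volume : Measure (Ed d)).toSphere Set.univ *
      ∫⁻ r in Set.Ioi (0:ℝ), ENNReal.ofReal (r ^ (d-1)) * f r := by
  haveI : Nonempty (Fin d) := ⟨⟨0, hd⟩⟩
  haveI : Nontrivial (Ed d) := by
    have : Module.finrank ℝ (Ed d) = d := finrank_euclideanSpace_fin
    have h2 : 0 < Module.finrank ℝ (Ed d) := by omega
    exact Module.nontrivial_of_finrank_pos h2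
  have h0 : ∫⁻ x : Ed d, f ‖x‖ = ∫⁻ x : ({0}ᶜ : Set (Ed d)), f ‖x.1‖ ∂(Measure.comap Subtype.val volume) := by
    rw [lintegral_subtype_comap (measurableSet_singleton _).compl (fun x => f ‖x‖),
      restrict_compl_singleton]
  rw [h0]
  have h1 := (Measure.measurePreserving_homeomorphUnitSphereProd
    (volume : Measure (Ed d))).lintegral_comp_emb
    (Homeomorph.measurableEmbedding _) (fun p => f p.2.1)
  have h2 : ∀ x : ({0}ᶜ : Set (Ed d)),
      (fun (p : sphere (0:Ed d) 1 × Ioi (0:ℝ)) => f p.2.1) ((homeomorphUnitSphereProd (Ed d)) x) = f ‖x.1‖ := by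
    intro x; simp
  rw [show (fun x : ({0}ᶜ : Set (Ed d)) => f ‖x.1‖)
      = fun x => (fun (p : sphere (0:Ed d) 1 × Ioi (0:ℝ)) => f p.2.1) ((homeomorphUnitSphereProd (Ed d)) x)
    from funext fun x => (h2 x).symm, h1]
  rw [lintegral_prod _ (by exact (hf.comp (measurable_subtype_coe.comp measurable_snd)).aemeasurable)]
  simp only [lintegral_const]
  rw [mul_comm]
  congr 1
  · have hden : Measurable fun r : Ioi (0:ℝ) =>
        ENNReal.ofReal (r.1 ^ (Module.finrank ℝ (Ed d) - 1)) :=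
      (measurable_subtype_coe.pow_const _).ennreal_ofReal
    have hfv : Measurable fun r : Ioi (0:ℝ) => f r.1 := hf.comp measurable_subtype_coe
    rw [Measure.volumeIoiPow, lintegral_withDensity_eq_lintegral_mul _ hden hfv]
    have := lintegral_subtype_comap (μ := (volume : Measure ℝ)) (measurableSet_Ioi (a := (0:ℝ)))
      (fun r => ENNReal.ofReal (r ^ (Module.finrank ℝ (Ed d) - 1)) * f r)
    simp only [Pi.mul_apply] at this ⊢
    rw [this, finrank_euclideanSpace_fin]

lemma ofReal_lintegral_lt_top {A : Set ℝ} (g : ℝ → ℝ) (hg : IntegrableOn g A volume) :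
    ∫⁻ r in A, ENNReal.ofReal (g r) < ⊤ := by
  refine lt_of_le_of_lt (lintegral_mono fun r => Real.ofReal_le_enorm (g r)) ?_
  exact hg.hasFiniteIntegral

lemma g0_integrable (d : ℕ) (hd : 0 < d) {s : ℝ} (hs0 : 0 < s) (hs1 : s < 1) :
    Integrable (fun z : Ed d => min ‖z‖ 1 * ‖z‖ / ‖z‖ ^ ((d:ℝ)+s+1)) volume := by
  set p : ℝ := (d:ℝ)+s+1 with hp
  have hmf : Measurable fun t : ℝ => min t 1 * t / t ^ p := by
    apply Measurable.div
    · exact (measurable_id.min measurable_const).mul measurable_id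
    · measurability
  have hnonneg : ∀ t : ℝ, 0 ≤ t → 0 ≤ min t 1 * t / t ^ p := by
    intro t ht
    have : (0:ℝ) ≤ min t 1 := le_min ht zero_le_one
    positivity
  constructor
  · exact (hmf.comp measurable_norm).aestronglyMeasurable
  · rw [hasFiniteIntegral_iff_norm]
    have key : (fun z : Ed d => ENNReal.ofReal ‖min ‖z‖ 1 * ‖z‖ / ‖z‖ ^ p‖)
        = fun z : Ed d => (fun t => ENNReal.ofReal (min t 1 * t / t ^ p)) ‖z‖ := by
      funext z
      rw [Real.norm_of_nonneg (hnonneg _ (norm_nonneg z))]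
    rw [show (∫⁻ z : Ed d, ENNReal.ofReal ‖min ‖z‖ 1 * ‖z‖ / ‖z‖ ^ p‖) =
        ∫⁻ z : Ed d, (fun t => ENNReal.ofReal (min t 1 * t / t ^ p)) ‖z‖ from by rw [key]]
    have hr := lintegral_radial d hd (fun t => ENNReal.ofReal (min t 1 * t / t ^ p))
      hmf.ennreal_ofReal
    rw [hr]
    refine ENNReal.mul_lt_top (measure_lt_top _ _) ?_
    have hsplit : Ioc (0:ℝ) 1 ∪ Ioi 1 = Ioi 0 := Ioc_union_Ioi_eq_Ioi zero_le_one
    rw [← hsplit, lintegral_union measurableSet_Ioi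
      (by rw [Set.disjoint_left]; rintro a ⟨_, h1⟩ h2; exact absurd h2 (not_lt.2 h1))]
    have e1 : ∫⁻ r in Ioc (0:ℝ) 1, ENNReal.ofReal (r ^ (d-1)) *
        ENNReal.ofReal (min r 1 * r / r ^ p)
        = ∫⁻ r in Ioc (0:ℝ) 1, ENNReal.ofReal (r ^ (-s)) := by
      refine setLIntegral_congr_fun measurableSet_Ioc ?_
      intro r hr
      beta_reduce
      have h0 : (0:ℝ) < r := hr.1
      rw [← ENNReal.ofReal_mul (by positivity)]
      congr 1
      rw [min_eq_left hr.2]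
      have h1 : (r:ℝ) ^ (d-1) = r ^ ((d:ℝ) - 1) := by
        rw [← Real.rpow_natCast r (d-1)]; congr 1; push_cast [Nat.cast_sub hd]; ring
      have h2 : r * r = r ^ (2:ℝ) := by
        rw [show (2:ℝ) = ((2:ℕ):ℝ) from by norm_num, Real.rpow_natCast]; ring
      calc r ^ (d-1) * (r * r / r ^ p)
          = r ^ ((d:ℝ)-1) * r ^ (2:ℝ) / r ^ p := by rw [h1, h2]; ring
        _ = r ^ ((d:ℝ) - 1 + 2 - p) := by rw [← Real.rpow_add h0, ← Real.rpow_sub h0]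
        _ = r ^ (-s) := by congr 1; rw [hp]; ring
    have e2 : ∫⁻ r in Ioi (1:ℝ), ENNReal.ofReal (r ^ (d-1)) *
        ENNReal.ofReal (min r 1 * r / r ^ p)
        = ∫⁻ r in Ioi (1:ℝ), ENNReal.ofReal (r ^ (-(s+1))) := by
      refine setLIntegral_congr_fun measurableSet_Ioi ?_
      intro r hr
      beta_reduce
      have h0 : (0:ℝ) < r := lt_trans zero_lt_one hr
      rw [← ENNReal.ofReal_mul (by positivity)]
      congr 1
      rw [min_eq_right (le_of_lt hr), one_mul]
      have h1 : (r:ℝ) ^ (d-1) = r ^ ((d:ℝ) - 1) := by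
        rw [← Real.rpow_natCast r (d-1)]; congr 1; push_cast [Nat.cast_sub hd]; ring
      have h2 : r = r ^ (1:ℝ) := (Real.rpow_one r).symm
      calc r ^ (d-1) * (r / r ^ p)
          = r ^ ((d:ℝ)-1) * r ^ (1:ℝ) / r ^ p := by rw [h1, ← h2]; ring
        _ = r ^ ((d:ℝ) - 1 + 1 - p) := by rw [← Real.rpow_add h0, ← Real.rpow_sub h0]
        _ = r ^ (-(s+1)) := by congr 1; rw [hp]; ring
    rw [e1, e2]
    refine ENNReal.add_lt_top.2 ⟨?_, ?_⟩
    · exact ofReal_lintegral_lt_top _ ((intervalIntegral.intervalIntegrable_rpow'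
        (by linarith : (-1:ℝ) < -s)).1)
    · exact ofReal_lintegral_lt_top _ (integrableOn_Ioi_rpow_of_lt (by linarith) zero_lt_one)


/-- change of variables for gradS -/
lemma gradS_eq (d : ℕ) (s : ℝ) (w : Ed d → ℝ) (x : Ed d) :
    gradS d s w x
      = muC d s • ∫ z : Ed d, ((w (x + z) - w x) / ‖z‖ ^ ((d : ℝ) + s + 1)) • z := by
  unfold gradS
  congr 1
  rw [← integral_add_left_eq_self
    (fun y => ((w y - w x) / ‖x - y‖ ^ ((d : ℝ) + s + 1)) • (y - x)) x]
  congr 1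
  funext z
  have h1 : x - (x + z) = -z := by abel
  have h2 : x + z - x = z := by abel
  rw [h1, h2, norm_neg]

lemma divS_eq (d : ℕ) (s : ℝ) (Ψ : Ed d → Ed d) (x : Ed d) :
    divS d s Ψ x
      = muC d s * ∫ z : Ed d, ⟪Ψ (x + z) - Ψ x, z⟫ / ‖z‖ ^ ((d : ℝ) + s + 1) := by
  unfold divS
  congr 1
  rw [← integral_add_left_eq_self
    (fun y => ⟪Ψ y - Ψ x, y - x⟫ / ‖x - y‖ ^ ((d : ℝ) + s + 1)) x]
  congr 1
  funext z
  have h1 : x - (x + z) = -z := by abel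
  have h2 : x + z - x = z := by abel
  rw [h1, h2, norm_neg]

lemma min_bound {v A B t : ℝ} (ht : 0 ≤ t) (h1 : v ≤ A * t) (h2 : v ≤ B)
    (hA : 0 ≤ A) (hB : 0 ≤ B) : v ≤ max A B * min t 1 := by
  rcases le_total t 1 with h | h
  · rw [min_eq_left h]
    exact h1.trans (mul_le_mul_of_nonneg_right (le_max_left _ _) ht)
  · rw [min_eq_right h, mul_one]
    exact h2.trans (le_max_right _ _)

def F1 (d : ℕ) (s : ℝ) (w : Ed d → ℝ) (Ψ : Ed d → Ed d) (x z : Ed d) : ℝ :=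
  (w (x + z) - w x) / ‖z‖ ^ ((d : ℝ) + s + 1) * ⟪Ψ x, z⟫

def F2 (d : ℕ) (s : ℝ) (w : Ed d → ℝ) (Ψ : Ed d → Ed d) (x z : Ed d) : ℝ :=
  w x * (⟪Ψ (x + z) - Ψ x, z⟫ / ‖z‖ ^ ((d : ℝ) + s + 1))

end Aux

set_option maxHeartbeats 2000000 in
/-- Fractional integration by parts: for `w ∈ C_c^∞(ℝ^d)`, `Ψ ∈ C_c^∞(ℝ^d, ℝ^d)` and
`s ∈ (0,1)`, `∫ grad^s w · Ψ = - ∫ w div^s Ψ`. -/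
theorem fractional_integration_by_parts (d : ℕ) (s : ℝ) (hs : s ∈ Set.Ioo (0 : ℝ) 1)
    (w : Ed d → ℝ) (hw : ContDiff ℝ (⊤ : ℕ∞) w) (hwc : HasCompactSupport w)
    (Ψ : Ed d → Ed d) (hΨ : ContDiff ℝ (⊤ : ℕ∞) Ψ) (hΨc : HasCompactSupport Ψ) :
    ∫ x : Ed d, ⟪gradS d s w x, Ψ x⟫ = - ∫ x : Ed d, w x * divS d s Ψ x := by
  obtain ⟨hs0, hs1⟩ := hs
  rcases Nat.eq_zero_or_pos d with hd | hd
  · subst hd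
    have hgrad : ∀ x : Ed 0, gradS 0 s w x = 0 := by
      intro x
      unfold gradS
      have : (fun y : Ed 0 => ((w y - w x) / ‖x - y‖ ^ (((0:ℕ) : ℝ) + s + 1)) • (y - x))
          = fun _ => (0 : Ed 0) := by
        funext y
        rw [Subsingleton.elim y x]
        simp
      rw [this, integral_zero, smul_zero]
    have hdiv : ∀ x : Ed 0, divS 0 s Ψ x = 0 := by
      intro x
      unfold divS
      have : (fun y : Ed 0 => ⟪Ψ y - Ψ x, y - x⟫ / ‖x - y‖ ^ (((0:ℕ) : ℝ) + s + 1))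
          = fun _ => (0 : ℝ) := by
        funext y
        rw [Subsingleton.elim y x]
        simp
      rw [this, integral_zero, mul_zero]
    simp [hgrad, hdiv]
  -- main case
  set p : ℝ := (d : ℝ) + s + 1 with hpdef
  obtain ⟨Lw, hLw⟩ := hw.lipschitzWith_of_hasCompactSupport hwc (by simp)
  obtain ⟨LΨ, hLΨ⟩ := hΨ.lipschitzWith_of_hasCompactSupport hΨc (by simp)
  obtain ⟨Mw, hMw⟩ := hwc.exists_bound_of_continuous hw.continuous
  obtain ⟨MΨ, hMΨ⟩ := hΨc.exists_bound_of_continuous hΨ.continuous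
  have hMw0 : 0 ≤ Mw := le_trans (norm_nonneg _) (hMw 0)
  have hMΨ0 : 0 ≤ MΨ := le_trans (norm_nonneg _) (hMΨ 0)
  set cW : ℝ := max (Lw : ℝ) (2 * Mw) with hcWdef
  set cΨ : ℝ := max (LΨ : ℝ) (2 * MΨ) with hcΨdef
  have hcW0 : 0 ≤ cW := le_trans Lw.coe_nonneg (le_max_left _ _)
  have hΔw : ∀ x z : Ed d, |w (x + z) - w x| ≤ cW * min ‖z‖ 1 := by
    intro x z
    refine min_bound (B := 2 * Mw) (norm_nonneg z) ?_ ?_ Lw.coe_nonneg (by linarith)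
    · have h1 := hLw.dist_le_mul (x + z) x
      rw [dist_eq_norm, dist_eq_norm] at h1
      simpa [Real.norm_eq_abs, add_sub_cancel_left] using h1
    · calc |w (x + z) - w x| ≤ ‖w (x + z)‖ + ‖w x‖ := by
            rw [Real.norm_eq_abs, Real.norm_eq_abs]; exact abs_sub _ _
        _ ≤ 2 * Mw := by have := hMw (x + z); have := hMw x; linarith
  have hΔΨ : ∀ x z : Ed d, ‖Ψ (x + z) - Ψ x‖ ≤ cΨ * min ‖z‖ 1 := by
    intro x z
    refine min_bound (B := 2 * MΨ) (norm_nonneg z) ?_ ?_ LΨ.coe_nonneg (by linarith)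
    · have h1 := hLΨ.dist_le_mul (x + z) x
      rw [dist_eq_norm, dist_eq_norm] at h1
      simpa [add_sub_cancel_left] using h1
    · calc ‖Ψ (x + z) - Ψ x‖ ≤ ‖Ψ (x + z)‖ + ‖Ψ x‖ := norm_sub_le _ _
        _ ≤ 2 * MΨ := by have := hMΨ (x + z); have := hMΨ x; linarith
  have hbnn : ∀ z : Ed d, (0:ℝ) ≤ ‖z‖ ^ p := fun z => Real.rpow_nonneg (norm_nonneg z) p
  have hminnn : ∀ z : Ed d, (0:ℝ) ≤ min ‖z‖ 1 := fun z => le_min (norm_nonneg z) zero_le_one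
  have hg₀ : Integrable (fun z : Ed d => min ‖z‖ 1 * ‖z‖ / ‖z‖ ^ p) volume :=
    g0_integrable d hd hs0 hs1
  have hrp : Measurable fun t : ℝ => t ^ p := by measurability
  -- integrability of the vector integrand in `z`, for each `x`
  have hIv : ∀ x : Ed d, Integrable (fun z : Ed d => ((w (x + z) - w x) / ‖z‖ ^ p) • z) := by
    intro x
    have hm : AEStronglyMeasurable (fun z : Ed d => ((w (x + z) - w x) / ‖z‖ ^ p) • z) volume := by
      refine Measurable.aestronglyMeasurable ?_
      refine Measurable.fun_smul ?_ measurable_id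
      exact (((hw.continuous.comp (continuous_const.add continuous_id)).sub
        continuous_const).measurable).div (hrp.comp measurable_norm)
    refine Integrable.mono' (hg₀.const_mul cW) hm (Filter.Eventually.of_forall fun z => ?_)
    rw [norm_smul, Real.norm_eq_abs, abs_div, abs_of_nonneg (hbnn z)]
    calc |w (x + z) - w x| / ‖z‖ ^ p * ‖z‖ ≤ cW * min ‖z‖ 1 / ‖z‖ ^ p * ‖z‖ := by
          gcongr
          exact hΔw x z
      _ = cW * (min ‖z‖ 1 * ‖z‖ / ‖z‖ ^ p) := by ring
  -- pointwise identity for the gradient pairing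
  have hx1 : ∀ x : Ed d, ⟪gradS d s w x, Ψ x⟫ = muC d s * ∫ z : Ed d, F1 d s w Ψ x z := by
    intro x
    rw [gradS_eq, real_inner_smul_left]
    congr 1
    rw [real_inner_comm, ← integral_inner (hIv x) (Ψ x)]
    congr 1
    funext z
    rw [real_inner_smul_right]
    rfl
  have hx2 : ∀ x : Ed d, w x * divS d s Ψ x = muC d s * ∫ z : Ed d, F2 d s w Ψ x z := by
    intro x
    rw [divS_eq]
    have h1 : w x * (∫ z : Ed d, ⟪Ψ (x + z) - Ψ x, z⟫ / ‖z‖ ^ p) = ∫ z : Ed d, F2 d s w Ψ x z :=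
      (integral_const_mul _ _).symm
    calc w x * (muC d s * ∫ z : Ed d, ⟪Ψ (x + z) - Ψ x, z⟫ / ‖z‖ ^ p)
        = muC d s * (w x * ∫ z : Ed d, ⟪Ψ (x + z) - Ψ x, z⟫ / ‖z‖ ^ p) := by ring
      _ = muC d s * ∫ z : Ed d, F2 d s w Ψ x z := by rw [h1]
  -- product integrability of F1
  have hindΨ : Integrable ((tsupport Ψ).indicator fun _ : Ed d => MΨ * cW) volume := by
    refine (integrable_indicator_iff (isClosed_tsupport Ψ).measurableSet).2 ?_
    exact integrableOn_const hΨc.measure_lt_top.ne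
  have hindw : Integrable ((tsupport w).indicator fun _ : Ed d => Mw * cΨ) volume := by
    refine (integrable_indicator_iff (isClosed_tsupport w).measurableSet).2 ?_
    exact integrableOn_const hwc.measure_lt_top.ne
  have hF1 : Integrable (fun q : Ed d × Ed d => F1 d s w Ψ q.1 q.2) (volume.prod volume) := by
    refine Integrable.mono'
      (g := fun q : Ed d × Ed d => (tsupport Ψ).indicator (fun _ => MΨ * cW) q.1 *
        (min ‖q.2‖ 1 * ‖q.2‖ / ‖q.2‖ ^ p)) (Integrable.mul_prod hindΨ hg₀) ?_
      (Filter.Eventually.of_forall fun q => ?_)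
    · refine Measurable.aestronglyMeasurable ?_
      refine Measurable.mul ?_ ?_
      · exact (((hw.continuous.comp (continuous_fst.add continuous_snd)).sub
          (hw.continuous.comp continuous_fst)).measurable).div
          (hrp.comp (measurable_norm.comp measurable_snd))
      · exact (Continuous.inner (hΨ.continuous.comp continuous_fst) continuous_snd).measurable
    · obtain ⟨x, z⟩ := q
      dsimp only
      by_cases hx : x ∈ tsupport Ψ
      · rw [Set.indicator_of_mem hx]
        rw [Real.norm_eq_abs, F1, abs_mul, abs_div, abs_of_nonneg (hbnn z)]
        calc |w (x + z) - w x| / ‖z‖ ^ p * |⟪Ψ x, z⟫|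
            ≤ cW * min ‖z‖ 1 / ‖z‖ ^ p * (MΨ * ‖z‖) := by
              gcongr
              · exact hΔw x z
              · calc |⟪Ψ x, z⟫| ≤ ‖Ψ x‖ * ‖z‖ := abs_real_inner_le_norm _ _
                  _ ≤ MΨ * ‖z‖ := by gcongr; exact hMΨ x
          _ = MΨ * cW * (min ‖z‖ 1 * ‖z‖ / ‖z‖ ^ p) := by ring
      · rw [Set.indicator_of_notMem hx, zero_mul]
        have h0 : Ψ x = 0 := image_eq_zero_of_notMem_tsupport hx
        simp [F1, h0]
  have hF2 : Integrable (fun q : Ed d × Ed d => F2 d s w Ψ q.1 q.2) (volume.prod volume) := by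
    refine Integrable.mono'
      (g := fun q : Ed d × Ed d => (tsupport w).indicator (fun _ => Mw * cΨ) q.1 *
        (min ‖q.2‖ 1 * ‖q.2‖ / ‖q.2‖ ^ p)) (Integrable.mul_prod hindw hg₀) ?_
      (Filter.Eventually.of_forall fun q => ?_)
    · refine Measurable.aestronglyMeasurable ?_
      refine Measurable.mul (hw.continuous.comp continuous_fst).measurable ?_
      refine Measurable.div ?_ (hrp.comp (measurable_norm.comp measurable_snd))
      exact (Continuous.inner ((hΨ.continuous.comp (continuous_fst.add continuous_snd)).sub
        (hΨ.continuous.comp continuous_fst)) continuous_snd).measurable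
    · obtain ⟨x, z⟩ := q
      dsimp only
      by_cases hx : x ∈ tsupport w
      · rw [Set.indicator_of_mem hx]
        rw [Real.norm_eq_abs, F2, abs_mul, abs_div, abs_of_nonneg (hbnn z)]
        calc |w x| * (|⟪Ψ (x + z) - Ψ x, z⟫| / ‖z‖ ^ p)
            ≤ Mw * (cΨ * min ‖z‖ 1 * ‖z‖ / ‖z‖ ^ p) := by
              gcongr
              · exact (Real.norm_eq_abs (w x)) ▸ hMw x
              · calc |⟪Ψ (x + z) - Ψ x, z⟫| ≤ ‖Ψ (x + z) - Ψ x‖ * ‖z‖ :=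
                    abs_real_inner_le_norm _ _
                  _ ≤ cΨ * min ‖z‖ 1 * ‖z‖ := by gcongr; exact hΔΨ x z
          _ = Mw * cΨ * (min ‖z‖ 1 * ‖z‖ / ‖z‖ ^ p) := by ring
      · rw [Set.indicator_of_notMem hx, zero_mul]
        have h0 : w x = 0 := image_eq_zero_of_notMem_tsupport hx
        simp [F2, h0]
  -- integrability in `x` for fixed `z`
  have hcont1 : ∀ z : Ed d, Integrable (fun x : Ed d => F1 d s w Ψ x z) := by
    intro z
    refine Continuous.integrable_of_hasCompactSupport ?_ ?_
    · exact (((hw.continuous.comp (continuous_id.add continuous_const)).sub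
        hw.continuous).div_const _).mul (Continuous.inner hΨ.continuous continuous_const)
    · exact HasCompactSupport.intro hΨc fun x hx => by
        simp [F1, image_eq_zero_of_notMem_tsupport hx]
  have hcont2 : ∀ z : Ed d, Integrable (fun x : Ed d => F2 d s w Ψ x z) := by
    intro z
    refine Continuous.integrable_of_hasCompactSupport ?_ ?_
    · exact (hw.continuous).mul ((Continuous.inner
        ((hΨ.continuous.comp (continuous_id.add continuous_const)).sub hΨ.continuous)
        continuous_const).div_const _)
    · exact HasCompactSupport.intro hwc fun x hx => by
        simp [F2, image_eq_zero_of_notMem_tsupport hx]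
  have hφcont : Continuous (fun a : Ed d => w a • Ψ a) := hw.continuous.smul hΨ.continuous
  have hφsupp : HasCompactSupport (fun a : Ed d => w a • Ψ a) := hwc.smul_right
  have hφinner : ∀ z : Ed d, HasCompactSupport (fun x : Ed d => ⟪w x • Ψ x, z⟫) := by
    intro z
    exact HasCompactSupport.intro hwc fun x hx => by
      simp [image_eq_zero_of_notMem_tsupport hx]
  have hinner : ∀ z : Ed d, Integrable (fun x : Ed d => ⟪w x • Ψ x, z⟫) := fun z =>
    (Continuous.inner hφcont continuous_const).integrable_of_hasCompactSupport (hφinner z)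
  have hinner_shift : ∀ z : Ed d, Integrable (fun x : Ed d => ⟪w (z + x) • Ψ (z + x), z⟫) := by
    intro z
    refine Continuous.integrable_of_hasCompactSupport ?_ ?_
    · exact Continuous.inner ((hw.continuous.comp (continuous_const.add continuous_id)).smul
        (hΨ.continuous.comp (continuous_const.add continuous_id))) continuous_const
    · exact (hφinner z).comp_homeomorph (Homeomorph.addLeft z)
  -- oddness of the inner integral
  have hodd : ∀ z : Ed d, (∫ x : Ed d, (F1 d s w Ψ x (-z) + F2 d s w Ψ x (-z)))
      = - ∫ x : Ed d, (F1 d s w Ψ x z + F2 d s w Ψ x z) := by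
    intro z
    have hpt : ∀ x : Ed d, F1 d s w Ψ (z + x) (-z) + F2 d s w Ψ (z + x) (-z)
        = -(F1 d s w Ψ x z + F2 d s w Ψ x z)
          + (2 / ‖z‖ ^ p) * (⟪w (z + x) • Ψ (z + x), z⟫ - ⟪w x • Ψ x, z⟫) := by
      intro x
      have e0 : z + x + -z = x := by abel
      have e1 : x + z = z + x := add_comm x z
      simp only [F1, F2, e0, e1, norm_neg, inner_neg_right, inner_sub_left,
        real_inner_smul_left]
      ring
    calc (∫ x : Ed d, (F1 d s w Ψ x (-z) + F2 d s w Ψ x (-z)))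
        = ∫ x : Ed d, (F1 d s w Ψ (z + x) (-z) + F2 d s w Ψ (z + x) (-z)) :=
          (integral_add_left_eq_self (fun x => F1 d s w Ψ x (-z) + F2 d s w Ψ x (-z)) z).symm
      _ = ∫ x : Ed d, (-(F1 d s w Ψ x z + F2 d s w Ψ x z)
            + (2 / ‖z‖ ^ p) * (⟪w (z + x) • Ψ (z + x), z⟫ - ⟪w x • Ψ x, z⟫)) := by
          simp only [hpt]
      _ = (∫ x : Ed d, -(F1 d s w Ψ x z + F2 d s w Ψ x z))
            + ∫ x : Ed d, (2 / ‖z‖ ^ p) * (⟪w (z + x) • Ψ (z + x), z⟫ - ⟪w x • Ψ x, z⟫) := by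
          refine integral_add ?_ ?_
          · exact ((hcont1 z).add (hcont2 z)).neg
          · exact ((hinner_shift z).sub (hinner z)).const_mul _
      _ = - ∫ x : Ed d, (F1 d s w Ψ x z + F2 d s w Ψ x z) := by
          rw [integral_neg, integral_const_mul, integral_sub (hinner_shift z) (hinner z),
            show (∫ x : Ed d, ⟪w (z + x) • Ψ (z + x), z⟫) = ∫ x : Ed d, ⟪w x • Ψ x, z⟫ from
              integral_add_left_eq_self (fun x => ⟪w x • Ψ x, z⟫) z]
          simp
  -- Fubini and conclusion
  have hsum : Integrable (fun q : Ed d × Ed d => F1 d s w Ψ q.1 q.2 + F2 d s w Ψ q.1 q.2)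
      (volume.prod volume) := hF1.add hF2
  have hzero : (∫ z : Ed d, ∫ x : Ed d, (F1 d s w Ψ x z + F2 d s w Ψ x z)) = 0 := by
    have hneg := integral_neg_eq_self
      (fun z : Ed d => ∫ x : Ed d, (F1 d s w Ψ x z + F2 d s w Ψ x z)) volume
    simp only [hodd, integral_neg] at hneg
    linarith
  have hkey : (∫ x : Ed d, ∫ z : Ed d, F1 d s w Ψ x z)
      + (∫ x : Ed d, ∫ z : Ed d, F2 d s w Ψ x z) = 0 := by
    rw [show (∫ x : Ed d, ∫ z : Ed d, F1 d s w Ψ x z)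
        = ∫ q : Ed d × Ed d, F1 d s w Ψ q.1 q.2 ∂(volume.prod volume) from
        integral_integral (f := fun x z => F1 d s w Ψ x z) hF1,
      show (∫ x : Ed d, ∫ z : Ed d, F2 d s w Ψ x z)
        = ∫ q : Ed d × Ed d, F2 d s w Ψ q.1 q.2 ∂(volume.prod volume) from
        integral_integral (f := fun x z => F2 d s w Ψ x z) hF2,
      ← integral_add hF1 hF2]
    calc (∫ q : Ed d × Ed d, (F1 d s w Ψ q.1 q.2 + F2 d s w Ψ q.1 q.2) ∂(volume.prod volume))
        = ∫ x : Ed d, ∫ z : Ed d, (F1 d s w Ψ x z + F2 d s w Ψ x z) :=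
          (integral_integral (f := fun x z => F1 d s w Ψ x z + F2 d s w Ψ x z) hsum).symm
      _ = ∫ z : Ed d, ∫ x : Ed d, (F1 d s w Ψ x z + F2 d s w Ψ x z) :=
          integral_integral_swap (f := fun x z => F1 d s w Ψ x z + F2 d s w Ψ x z) hsum
      _ = 0 := hzero
  calc (∫ x : Ed d, ⟪gradS d s w x, Ψ x⟫)
      = ∫ x : Ed d, muC d s * ∫ z : Ed d, F1 d s w Ψ x z := by simp only [hx1]
    _ = muC d s * ∫ x : Ed d, ∫ z : Ed d, F1 d s w Ψ x z := integral_const_mul _ _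
    _ = -(muC d s * ∫ x : Ed d, ∫ z : Ed d, F2 d s w Ψ x z) := by
        rw [show (∫ x : Ed d, ∫ z : Ed d, F1 d s w Ψ x z)
          = -(∫ x : Ed d, ∫ z : Ed d, F2 d s w Ψ x z) from by linarith]
        ring
    _ = -(∫ x : Ed d, muC d s * ∫ z : Ed d, F2 d s w Ψ x z) := by rw [integral_const_mul]
    _ = - ∫ x : Ed d, w x * divS d s Ψ x := by simp only [← hx2]
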